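/- Let U ∈ 𝒰 and let u(re^{iθ}) = ((1 − r²)/(2π)) ∫_{−π}^{π} U(x)/(1 − 2r cos(θ − x) + r²) dx be its Poisson extension. Then for all 0 < r < 1 and θ ∈ [−π,π] with max(2|θ|, 1 − r) ≤ π one has u(re^{iθ}) ≥ (1/(4π))·(1 − r)·h_U(max(2|θ|, 1 − r)). -/

import Mathlib

open MeasureTheory Filter Set

noncomputable section

noncomputable def hU (U : ℝ → ℝ) (t : ℝ) : ℝ := ∫ x in t..Real.pi, U x / x ^ 2

def ClassU (U : ℝ → ℝ) : Prop :=
  Continuous U ∧ (∀ t, U (-t) = U t) ∧ Function.Periodic U (2 * Real.pi) ∧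
  U 0 = 0 ∧ MonotoneOn U (Set.Icc 0 Real.pi) ∧
  (∀ t, 0 < t → t ≤ Real.pi → 0 < U t) ∧
  Tendsto (fun t => hU U t) (nhdsWithin 0 (Set.Ioi 0)) atTop

noncomputable def poisson (U : ℝ → ℝ) (r θ : ℝ) : ℝ :=
  ((1 - r ^ 2) / (2 * Real.pi)) *
    ∫ x in (-Real.pi)..Real.pi, U x / (1 - 2 * r * Real.cos (θ - x) + r ^ 2)

/-!
Write `D(x) = 1 - 2r cos(θ - x) + r² = (1 - r)² + 2r(1 - cos(θ - x))` for the denominator of the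
Poisson kernel. Since `U ≥ 0` on `[-π, π]`, the Poisson integral is at least its part over
`[ρ, π]`, `ρ = max (2θ) (1 - r)`. For `0 ≤ θ` and `x ≥ ρ`, `1 - cos y ≤ y² / 2` gives
`D(x) ≤ (1 - r)² + (x - θ)² ≤ 2x²`, so that part is at least `h_U(ρ) / 2`, and
`(1 - r²) / 2 ≥ (1 - r) / 2`. Negative `θ` reduce to `|θ|` because `U` is even.
-/

open Real

lemma nonneg_of_even_of_monotoneOn {U : ℝ → ℝ} {a : ℝ} (hUe : ∀ t, U (-t) = U t)
    (hU0 : U 0 = 0) (hU : MonotoneOn U (Icc 0 a)) {x : ℝ} (hx : x ∈ Icc (-a) a) : 0 ≤ U x := by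
  have habs : U |x| = U x := by
    rcases abs_choice x with h | h <;> rw [h]
    exact hUe x
  rw [← habs, ← hU0]
  exact hU ⟨le_rfl, (abs_nonneg x).trans (abs_le.2 hx)⟩ ⟨abs_nonneg x, abs_le.2 hx⟩ (abs_nonneg x)

lemma poisson_abs {U : ℝ → ℝ} (hUe : ∀ t, U (-t) = U t) (r θ : ℝ) :
    poisson U r |θ| = poisson U r θ := by
  rcases abs_choice θ with h | h
  · rw [h]
  have hneg := intervalIntegral.integral_comp_neg (a := -π) (b := π)
    fun x => U x / (1 - 2 * r * cos (θ - x) + r ^ 2)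
  rw [neg_neg] at hneg
  rw [h, poisson, poisson, ← hneg]
  congr 2 with x
  rw [hUe, show θ - -x = -(-θ - x) by ring, cos_neg]

lemma sq_one_sub_le_poisson_denom {r : ℝ} (hr : 0 ≤ r) (y : ℝ) :
    (1 - r) ^ 2 ≤ 1 - 2 * r * cos y + r ^ 2 := by
  nlinarith [cos_le_one y]

lemma poisson_denom_le {r : ℝ} (hr : 0 ≤ r) (y : ℝ) :
    1 - 2 * r * cos y + r ^ 2 ≤ (1 - r) ^ 2 + r * y ^ 2 := by
  nlinarith [one_sub_sq_div_two_le_cos (x := y)]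

lemma poisson_denom_le_two_mul_sq {r θ x : ℝ} (hr₀ : 0 ≤ r) (hr₁ : r ≤ 1) (hθ : 0 ≤ θ)
    (hθx : θ ≤ x) (hrx : 1 - r ≤ x) :
    1 - 2 * r * cos (θ - x) + r ^ 2 ≤ 2 * x ^ 2 := by
  have h₁ : (1 - r) ^ 2 ≤ x ^ 2 := pow_le_pow_left₀ (by linarith) hrx 2
  have h₂ : r * (θ - x) ^ 2 ≤ x ^ 2 := by
    calc r * (θ - x) ^ 2 ≤ 1 * (θ - x) ^ 2 := by gcongr
      _ ≤ x ^ 2 := by nlinarith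
  linarith [poisson_denom_le hr₀ (θ - x)]

lemma hU_le_two_mul_integral_poisson {U : ℝ → ℝ} (hUc : Continuous U)
    (hU_nonneg : ∀ x ∈ Icc (-π) π, 0 ≤ U x) {r θ ρ : ℝ} (hr₀ : 0 ≤ r) (hr₁ : r < 1) (hθ : 0 ≤ θ)
    (hθρ : θ ≤ ρ) (hrρ : 1 - r ≤ ρ) (hρ : ρ ≤ π) :
    hU U ρ ≤ 2 * ∫ x in (-π)..π, U x / (1 - 2 * r * cos (θ - x) + r ^ 2) := by
  have hρ₀ : 0 < ρ := by linarith
  have hD : ∀ x, 0 < 1 - 2 * r * cos (θ - x) + r ^ 2 := fun x =>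
    (pow_pos (by linarith) 2).trans_le (sq_one_sub_le_poisson_denom hr₀ _)
  have hf : Continuous fun x => U x / (1 - 2 * r * cos (θ - x) + r ^ 2) :=
    hUc.div (by fun_prop) fun x => (hD x).ne'
  have hg : ContinuousOn (fun x => U x / (2 * x ^ 2)) (uIcc ρ π) := by
    refine hUc.continuousOn.div (by fun_prop) fun x hx => ?_
    rw [uIcc_of_le hρ] at hx
    have := hρ₀.trans_le hx.1
    positivity
  calc hU U ρ = 2 * ∫ x in ρ..π, U x / (2 * x ^ 2) := by
        rw [hU, ← intervalIntegral.integral_const_mul]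
        congr 1 with x
        field_simp
    _ ≤ 2 * ∫ x in ρ..π, U x / (1 - 2 * r * cos (θ - x) + r ^ 2) := by
        gcongr
        refine intervalIntegral.integral_mono_on hρ ?_ (hf.intervalIntegrable _ _) fun x hx => ?_
        · exact hg.intervalIntegrable
        · have hx₀ : 0 < x := hρ₀.trans_le hx.1
          gcongr
          · exact hU_nonneg x ⟨by linarith, hx.2⟩
          · exact hD x
          · exact poisson_denom_le_two_mul_sq hr₀ hr₁.le hθ (hθρ.trans hx.1) (hrρ.trans hx.1)
    _ ≤ 2 * ∫ x in (-π)..π, U x / (1 - 2 * r * cos (θ - x) + r ^ 2) := by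
        gcongr
        refine intervalIntegral.integral_mono_interval (by linarith) hρ le_rfl ?_
          (hf.intervalIntegrable _ _)
        refine (ae_restrict_iff' measurableSet_Ioc).2 (ae_of_all _ fun x hx => ?_)
        exact div_nonneg (hU_nonneg x (Ioc_subset_Icc_self hx)) (hD x).le

lemma le_poisson_of_nonneg {U : ℝ → ℝ} (hUc : Continuous U)
    (hU_nonneg : ∀ x ∈ Icc (-π) π, 0 ≤ U x) {r θ ρ : ℝ} (hr₀ : 0 ≤ r) (hr₁ : r < 1) (hθ : 0 ≤ θ)
    (hθρ : θ ≤ ρ) (hrρ : 1 - r ≤ ρ) (hρ : ρ ≤ π) :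
    1 / (4 * π) * (1 - r) * hU U ρ ≤ poisson U r θ := by
  have hhU : 0 ≤ hU U ρ := intervalIntegral.integral_nonneg hρ fun x hx =>
    div_nonneg (hU_nonneg x ⟨by linarith [hx.1, pi_pos], hx.2⟩) (sq_nonneg x)
  have hI := hU_le_two_mul_integral_poisson hUc hU_nonneg hr₀ hr₁ hθ hθρ hrρ hρ
  have hc : 0 ≤ (1 - r ^ 2) / (2 * π) := div_nonneg (by nlinarith) (by positivity)
  calc 1 / (4 * π) * (1 - r) * hU U ρ = (1 - r) * hU U ρ / (4 * π) := by ring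
    _ ≤ (1 - r ^ 2) * hU U ρ / (4 * π) := by gcongr; nlinarith
    _ = (1 - r ^ 2) / (2 * π) * (hU U ρ / 2) := by ring
    _ ≤ poisson U r θ := by rw [poisson]; gcongr; linarith

theorem stmt11_general (U : ℝ → ℝ) (hU_mem : ClassU U)
    (r θ : ℝ) (hr₀ : 0 < r) (hr₁ : r < 1)
    (hmax : max (2 * |θ|) (1 - r) ≤ Real.pi) :
    (1 / (4 * Real.pi)) * (1 - r) * hU U (max (2 * |θ|) (1 - r)) ≤ poisson U r θ := by
  obtain ⟨hUc, hUe, -, hU0, hUmono, -, -⟩ := hU_mem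
  rw [← poisson_abs hUe]
  exact le_poisson_of_nonneg hUc (fun x => nonneg_of_even_of_monotoneOn hUe hU0 hUmono)
    hr₀.le hr₁ (abs_nonneg θ) (by linarith [le_max_left (2 * |θ|) (1 - r), abs_nonneg θ])
    (le_max_right _ _) hmax

theorem stmt11 (U : ℝ → ℝ) (hU_mem : ClassU U)
    (r θ : ℝ) (hr₀ : 0 < r) (hr₁ : r < 1)
    (hθ : θ ∈ Set.Icc (-Real.pi) Real.pi)
    (hmax : max (2 * |θ|) (1 - r) ≤ Real.pi) :
    (1 / (4 * Real.pi)) * (1 - r) * hU U (max (2 * |θ|) (1 - r)) ≤ poisson U r θ :=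
  stmt11_general U hU_mem r θ hr₀ hr₁ hmax

end
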